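/- With ⊤_ι as above and z₁, ..., z_n with z_i ∈ 𝒜_{χ(i)}^{(ε(i))}, if exactly k of the maximal ε-monochromatic χ-intervals are ι-coloured, and d = 1 if both the ≺_χ-first and ≺_χ-last indices have ε-value ι and d = 0 otherwise, then the coefficient of z₁⋯z_n ⊗ 1 in ⊤_ι(z₁⋯z_n) is −k and the coefficient of 1 ⊗ z₁⋯z_n is d. -/

import Mathlib

noncomputable def chiKey {n : ℕ} (χ : Fin n → Bool) (i : Fin n) : Lex (ℕ × ℕ) :=
  toLex (if χ i then 0 else 1, if χ i then (i : ℕ) else n - (i : ℕ))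

noncomputable def sChi {n : ℕ} (χ : Fin n → Bool) : Equiv.Perm (Fin n) :=
  Tuple.sort (chiKey χ)

def ltChi {n : ℕ} (χ : Fin n → Bool) (i j : Fin n) : Prop :=
  (sChi χ).symm i < (sChi χ).symm j

noncomputable instance {n : ℕ} (χ : Fin n → Bool) (i j : Fin n) :
    Decidable (ltChi χ i j) :=
  inferInstanceAs (Decidable ((sChi χ).symm i < (sChi χ).symm j))

/-- `i ⪯_χ j`. -/
def leChi {n : ℕ} (χ : Fin n → Bool) (i j : Fin n) : Prop := ¬ ltChi χ j i

noncomputable instance {n : ℕ} (χ : Fin n → Bool) (i j : Fin n) :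
    Decidable (leChi χ i j) := inferInstanceAs (Decidable (¬ _))

/-- The closed `χ`-interval `[i,j]_χ`. -/
noncomputable def IccChi {n : ℕ} (χ : Fin n → Bool) (i j : Fin n) : Finset (Fin n) :=
  Finset.univ.filter fun k => leChi χ i k ∧ leChi χ k j

/-- The `χ`-interval `[i,j)_χ`. -/
noncomputable def IcoChi {n : ℕ} (χ : Fin n → Bool) (i j : Fin n) : Finset (Fin n) :=
  Finset.univ.filter fun k => leChi χ i k ∧ ltChi χ k j

/-- The `χ`-interval `(i,j]_χ`. -/
noncomputable def IocChi {n : ℕ} (χ : Fin n → Bool) (i j : Fin n) : Finset (Fin n) :=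
  Finset.univ.filter fun k => ltChi χ i k ∧ leChi χ k j

/-- The open `χ`-interval `(i,j)_χ`. -/
noncomputable def IooChi {n : ℕ} (χ : Fin n → Bool) (i j : Fin n) : Finset (Fin n) :=
  Finset.univ.filter fun k => ltChi χ i k ∧ ltChi χ k j

def IsChiInterval {n : ℕ} (χ : Fin n → Bool) (I : Set (Fin n)) : Prop :=
  ∀ a b c : Fin n, a ∈ I → c ∈ I → ltChi χ a b → ltChi χ b c → b ∈ I

def IsMono {n : ℕ} {ι : Type*} (ε : Fin n → ι) (I : Set (Fin n)) : Prop :=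
  ∀ a ∈ I, ∀ b ∈ I, ε a = ε b

def IsMaxMono {n : ℕ} {ι : Type*} (χ : Fin n → Bool) (ε : Fin n → ι)
    (J : Set (Fin n)) : Prop :=
  J.Nonempty ∧ IsChiInterval χ J ∧ IsMono ε J ∧
    ∀ K : Set (Fin n), IsChiInterval χ K → IsMono ε K → J ⊆ K → J = K

/-- The coefficient of the formal tensor `z_{Sᶜ} ⊗ z_S` in the defining sum of
`⊤_ι(z₁⋯z_n)`: the sum over pairs `i ⪯_χ j` in `ε⁻¹(ι)` of
`[S = [i,j]_χ] − [S = [i,j)_χ] − [S = (i,j]_χ] + [S = (i,j)_χ]`. -/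
noncomputable def taurCoeff {n : ℕ} {ι : Type*} [DecidableEq ι]
    (χ : Fin n → Bool) (ε : Fin n → ι) (c : ι) (S : Finset (Fin n)) : ℤ :=
  ∑ p : Fin n × Fin n,
    if ε p.1 = c ∧ ε p.2 = c ∧ leChi χ p.1 p.2 then
      (if S = IccChi χ p.1 p.2 then 1 else 0) - (if S = IcoChi χ p.1 p.2 then 1 else 0)
        - (if S = IocChi χ p.1 p.2 then 1 else 0) + (if S = IooChi χ p.1 p.2 then 1 else 0)
    else 0

/-!
Transported along `sChi χ`, the `χ`-order becomes the usual order of `Fin n`, and each summand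
becomes a signed indicator of an interval `[a,b]`, `[a,b)`, `(a,b]` or `(a,b)` with coloured
endpoints `a ≤ b`. Only `[⊥,⊤]` is everything, which gives the coefficient of `1 ⊗ z₁⋯z_n`.
The empty ones are `[a,a)`, `(a,a]`, `(a,a)` and `(a,b)` with `a ⋖ b`, so the coefficient of
`z₁⋯z_n ⊗ 1` is the number of coloured covering pairs minus the number of coloured points,
i.e. minus the number of coloured points without a coloured predecessor. These "run starts"
are exactly the minima of the maximal coloured runs.
-/

open Finset

theorem maximal_preimage_iff {α β : Type*} (e : α ≃ β) {P : Set α → Prop} {J : Set β} :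
    Maximal P (e ⁻¹' J) ↔ Maximal (fun K => P (e ⁻¹' K)) J := by
  have := e.symm.toOrderIsoSet.toOrderEmbedding.maximal_apply_mem_iff (t := {K | P K}) (x := J)
    (by simp [Set.range_eq_univ.2 e.symm.toOrderIsoSet.surjective])
  simpa [Equiv.image_symm_eq_preimage] using this

section Runs

variable {α ι : Type*} [LinearOrder α] (f : α → ι) (c : ι)

def IsRunStart (a : α) : Prop := f a = c ∧ ∀ b, b ⋖ a → f b ≠ c

def IsRun (K : Set α) : Prop := K.OrdConnected ∧ K ⊆ f ⁻¹' {c}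

def maximalRuns : Set (Set α) := {J | J.Nonempty ∧ Maximal (IsRun f c) J}

def runFrom (a : α) : Set α := {x | a ≤ x ∧ Set.Icc a x ⊆ f ⁻¹' {c}}

variable {f c}

theorem isRun_runFrom (a : α) : IsRun f c (runFrom f c a) :=
  ⟨⟨fun _ hx _ hy _ hz => ⟨hx.1.trans hz.1, (Set.Icc_subset_Icc_right hz.2).trans hy.2⟩⟩,
    fun _ hx => hx.2 ⟨hx.1, le_rfl⟩⟩

theorem isLeast_runFrom {a : α} (ha : f a = c) : IsLeast (runFrom f c a) a :=
  ⟨⟨le_rfl, by simpa using ha⟩, fun _ hx => hx.1⟩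

theorem subset_runFrom {K : Set α} {a : α} (hK : IsRun f c K) (ha : IsLeast K a) :
    K ⊆ runFrom f c a :=
  fun _ hx => ⟨ha.2 hx, (hK.1.out ha.1 hx).trans hK.2⟩

theorem maximal_runFrom [Finite α] {a : α} (ha : IsRunStart f c a) :
    Maximal (IsRun f c) (runFrom f c a) := by
  refine ⟨isRun_runFrom a, fun K ⟨hK, hKc⟩ hsub => ?_⟩
  have haK : a ∈ K := hsub (isLeast_runFrom ha.1).1
  refine subset_runFrom ⟨hK, hKc⟩ ⟨haK, fun x hx => not_lt.1 fun hxa => ?_⟩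
  obtain ⟨b, hxb, hba⟩ := exists_le_covBy_of_lt hxa
  exact ha.2 b hba (hKc (hK.out hx haK ⟨hxb, hba.le⟩))

theorem isRunStart_and_eq_runFrom {J : Set α} {m : α}
    (hJ : Maximal (IsRun f c) J) (hm : IsLeast J m) : IsRunStart f c m ∧ J = runFrom f c m := by
  have hJm : J = runFrom f c m := hJ.eq_of_subset (isRun_runFrom m) (subset_runFrom hJ.prop hm)
  refine ⟨⟨hJ.prop.2 hm.1, fun b hbm hb => ?_⟩, hJm⟩
  -- a coloured predecessor `b` of `m` would extend `J = runFrom m` to `runFrom b`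
  have hsub : J ⊆ runFrom f c b := by
    rw [hJm]
    refine fun x hx => ⟨hbm.le.trans hx.1, fun y hy => ?_⟩
    rcases hy.1.eq_or_lt with rfl | hby
    · exact hb
    · exact hx.2 ⟨hbm.ge_of_gt hby, hy.2⟩
  have hbJ : b ∈ J := (hJ.eq_of_subset (isRun_runFrom b) hsub) ▸ (isLeast_runFrom hb).1
  exact (hm.2 hbJ).not_gt hbm.lt

open scoped Classical in
theorem ncard_maximalRuns [Fintype α] : (maximalRuns f c).ncard = #{a | IsRunStart f c a} := by
  have hset : maximalRuns f c = runFrom f c '' {a | IsRunStart f c a} := by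
    ext J
    constructor
    · rintro ⟨hne, hJ⟩
      obtain ⟨m, hmJ, hmin⟩ := J.exists_min_image id J.toFinite hne
      obtain ⟨hm, rfl⟩ := isRunStart_and_eq_runFrom hJ ⟨hmJ, hmin⟩
      exact ⟨m, hm, rfl⟩
    · rintro ⟨a, ha, rfl⟩
      exact ⟨⟨a, (isLeast_runFrom ha.1).1⟩, maximal_runFrom ha⟩
  have hinj : Set.InjOn (runFrom f c) {a | IsRunStart f c a} := fun a ha b hb hab =>
    (isLeast_runFrom ha.1).unique (hab ▸ isLeast_runFrom hb.1)
  rw [hset, hinj.ncard_image, ← Set.ncard_coe_finset]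
  simp

open scoped Classical in
theorem card_isRunStart_add_card_covBy [Fintype α] [DecidableEq ι] :
    (#{a | IsRunStart f c a} : ℤ) + #{p : α × α | p.1 ⋖ p.2 ∧ f p.1 = c ∧ f p.2 = c}
      = #{a | f a = c} := by
  have hpairs : #{p : α × α | p.1 ⋖ p.2 ∧ f p.1 = c ∧ f p.2 = c}
      = #{a | f a = c ∧ ∃ b, b ⋖ a ∧ f b = c} := by
    refine card_bij (fun p _ => p.2) (fun p hp => ?_) (fun p hp q hq hpq => ?_) (fun a ha => ?_)
    · simp only [mem_filter, mem_univ, true_and] at hp ⊢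
      exact ⟨hp.2.2, p.1, hp.1, hp.2.1⟩
    · simp only [mem_filter, mem_univ, true_and] at hp hq
      exact Prod.ext (hp.1.unique_left (hpq ▸ hq.1)) hpq
    · simp only [mem_filter, mem_univ, true_and] at ha ⊢
      obtain ⟨hac, b, hba, hbc⟩ := ha
      exact ⟨(b, a), ⟨hba, hbc, hac⟩, rfl⟩
  rw [hpairs]
  norm_cast
  simp only [card_filter, ← sum_add_distrib]
  refine sum_congr rfl fun a _ => ?_
  by_cases hac : f a = c <;> by_cases hpred : ∃ b, b ⋖ a ∧ f b = c <;>
    simp_all [IsRunStart]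

end Runs

section IntervalCoeff

variable {α ι : Type*} [LinearOrder α] [LocallyFiniteOrder α] [DecidableEq ι]

def intervalTerm (S : Finset α) (a b : α) : ℤ :=
  (if S = Icc a b then 1 else 0) - (if S = Ico a b then 1 else 0)
    - (if S = Ioc a b then 1 else 0) + (if S = Ioo a b then 1 else 0)

def intervalCoeff [Fintype α] (f : α → ι) (c : ι) (S : Finset α) : ℤ :=
  ∑ p : α × α, if f p.1 = c ∧ f p.2 = c ∧ p.1 ≤ p.2 then intervalTerm S p.1 p.2 else 0

open scoped Classical in
theorem intervalTerm_empty {a b : α} (hab : a ≤ b) :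
    intervalTerm ∅ a b = (if a ⋖ b then 1 else 0) - (if a = b then 1 else 0) := by
  have hIoo : Ioo a b = ∅ ↔ a = b ∨ a ⋖ b := by
    rw [← coe_eq_empty, coe_Ioo, covBy_iff_Ioo_eq]
    rcases hab.eq_or_lt with rfl | hlt
    · simp
    · simp [hlt, hlt.ne]
  simp only [intervalTerm, eq_comm (a := (∅ : Finset α)), Icc_eq_empty_iff, Ico_eq_empty_iff,
    Ioc_eq_empty_iff, hIoo, hab, not_true_eq_false, if_false, not_lt]
  rcases hab.eq_or_lt with rfl | hlt
  · simp
  · simp [hlt.not_ge, hlt.ne]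

theorem intervalTerm_univ [Fintype α] {a₀ b₀ : α} (ha₀ : IsBot a₀) (hb₀ : IsTop b₀)
    (a b : α) :
    intervalTerm univ a b = if a = a₀ ∧ b = b₀ then 1 else 0 := by
  have hIcc : univ = Icc a b ↔ a = a₀ ∧ b = b₀ := by
    constructor
    · intro h
      have ha := (h ▸ mem_univ a₀ : a₀ ∈ Icc a b)
      have hb := (h ▸ mem_univ b₀ : b₀ ∈ Icc a b)
      exact ⟨le_antisymm (mem_Icc.1 ha).1 (ha₀ a), le_antisymm (hb₀ b) (mem_Icc.1 hb).2⟩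
    · rintro ⟨rfl, rfl⟩
      ext x
      simp [ha₀ x, hb₀ x]
  have hIco : univ ≠ Ico a b := fun h => right_notMem_Ico (h ▸ mem_univ b)
  have hIoc : univ ≠ Ioc a b := fun h => left_notMem_Ioc (h ▸ mem_univ a)
  have hIoo : univ ≠ Ioo a b := fun h => left_notMem_Ioo (h ▸ mem_univ a)
  simp only [intervalTerm, hIcc, hIco, hIoc, hIoo, if_false, sub_zero, add_zero]

theorem intervalCoeff_univ [Fintype α] (f : α → ι) (c : ι) {a₀ b₀ : α} (ha₀ : IsBot a₀)
    (hb₀ : IsTop b₀) :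
    intervalCoeff f c univ = if f a₀ = c ∧ f b₀ = c then 1 else 0 := by
  rw [intervalCoeff, Fintype.sum_eq_single (a₀, b₀)]
  · simp [intervalTerm_univ ha₀ hb₀, ha₀ b₀]
  · rintro ⟨a, b⟩ hp
    simp_all [intervalTerm_univ ha₀ hb₀]

open scoped Classical in
theorem intervalCoeff_empty [Fintype α] (f : α → ι) (c : ι) :
    intervalCoeff f c ∅ = -(#{a | IsRunStart f c a} : ℤ) := by
  have hterm : ∀ p : α × α,
      (if f p.1 = c ∧ f p.2 = c ∧ p.1 ≤ p.2 then intervalTerm ∅ p.1 p.2 else 0)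
        = (if p.1 ⋖ p.2 ∧ f p.1 = c ∧ f p.2 = c then 1 else 0)
          - (if p.1 = p.2 then if f p.1 = c then 1 else 0 else 0) := by
    rintro ⟨a, b⟩
    by_cases hab : a ≤ b
    · rw [apply_ite (fun t => t = _), intervalTerm_empty hab]
      split_ifs <;> simp_all
    · have hnab : ¬ a ⋖ b := fun h => hab h.le
      have hne : a ≠ b := fun h => hab h.le
      simp [hab, hnab, hne]
  have hdiag : ∑ p : α × α, (if p.1 = p.2 then if f p.1 = c then (1 : ℤ) else 0 else 0)
      = #{a | f a = c} := by
    rw [Fintype.sum_prod_type, card_filter]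
    push_cast
    exact sum_congr rfl fun a _ => by simp
  rw [intervalCoeff, Fintype.sum_congr _ _ hterm, sum_sub_distrib, hdiag, sum_boole,
    ← card_isRunStart_add_card_covBy]
  ring

end IntervalCoeff

section ChiOrder

variable {n : ℕ} {ι : Type*} (χ : Fin n → Bool)

theorem map_IccChi (i j : Fin n) :
    (IccChi χ i j).map (sChi χ).symm.toEmbedding = Icc ((sChi χ).symm i) ((sChi χ).symm j) := by
  ext; simp only [IccChi, mem_map_equiv, mem_filter, mem_univ, true_and]; simp [leChi, ltChi]

theorem map_IcoChi (i j : Fin n) :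
    (IcoChi χ i j).map (sChi χ).symm.toEmbedding = Ico ((sChi χ).symm i) ((sChi χ).symm j) := by
  ext; simp only [IcoChi, mem_map_equiv, mem_filter, mem_univ, true_and]; simp [leChi, ltChi]

theorem map_IocChi (i j : Fin n) :
    (IocChi χ i j).map (sChi χ).symm.toEmbedding = Ioc ((sChi χ).symm i) ((sChi χ).symm j) := by
  ext; simp only [IocChi, mem_map_equiv, mem_filter, mem_univ, true_and]; simp [leChi, ltChi]

theorem map_IooChi (i j : Fin n) :
    (IooChi χ i j).map (sChi χ).symm.toEmbedding = Ioo ((sChi χ).symm i) ((sChi χ).symm j) := by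
  ext; simp only [IooChi, mem_map_equiv, mem_filter, mem_univ, true_and]; simp [ltChi]

theorem taurCoeff_eq_intervalCoeff [DecidableEq ι] (ε : Fin n → ι) (c : ι)
    (S : Finset (Fin n)) :
    taurCoeff χ ε c S = intervalCoeff (ε ∘ sChi χ) c (S.map (sChi χ).symm.toEmbedding) := by
  refine Fintype.sum_equiv ((sChi χ).symm.prodCongr (sChi χ).symm) _ _ fun p => ?_
  simp [intervalTerm, leChi, ltChi, ← map_IccChi, ← map_IcoChi, ← map_IocChi, ← map_IooChi]

theorem isChiInterval_iff_ordConnected (J : Set (Fin n)) :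
    IsChiInterval χ J ↔ (sChi χ ⁻¹' J).OrdConnected := by
  constructor
  · refine fun h => Set.ordConnected_of_Ioo fun x hx y hy _ z hz => h _ _ _ hx hy ?_ ?_
    · simpa [ltChi] using hz.1
    · simpa [ltChi] using hz.2
  · intro h a b c ha hc hab hbc
    have hb : (sChi χ).symm b ∈ Set.Icc ((sChi χ).symm a) ((sChi χ).symm c) :=
      ⟨le_of_lt hab, le_of_lt hbc⟩
    simpa using h.out (by simpa using ha) (by simpa using hc) hb

theorem isMaxMono_and_forall_eq_iff (ε : Fin n → ι) (c : ι) (J : Set (Fin n)) :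
    (IsMaxMono χ ε J ∧ ∀ a ∈ J, ε a = c) ↔
      J.Nonempty ∧ Maximal (fun K => IsChiInterval χ K ∧ K ⊆ ε ⁻¹' {c}) J := by
  constructor
  · rintro ⟨⟨hne, hJ, -, hmax⟩, hc⟩
    refine ⟨hne, ⟨hJ, hc⟩, fun K ⟨hK, hKc⟩ hJK => (hmax K hK ?_ hJK).ge⟩
    exact fun a ha b hb => (hKc ha).trans (hKc hb).symm
  · rintro ⟨⟨j, hj⟩, ⟨hJ, hc⟩, hmax⟩
    refine ⟨⟨⟨j, hj⟩, hJ, fun a ha b hb => (hc ha).trans (hc hb).symm,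
      fun K hK hKm hJK => ?_⟩, hc⟩
    have hKc : K ⊆ ε ⁻¹' {c} := fun k hk => (hKm k hk j (hJK hj)).trans (hc hj)
    exact le_antisymm hJK (hmax ⟨hK, hKc⟩ hJK)

theorem isMaxMono_and_forall_eq_iff_preimage (ε : Fin n → ι) (c : ι) (J : Set (Fin n)) :
    (IsMaxMono χ ε J ∧ ∀ a ∈ J, ε a = c) ↔ sChi χ ⁻¹' J ∈ maximalRuns (ε ∘ sChi χ) c := by
  simp only [maximalRuns, IsRun, Set.mem_ofPred_eq, isMaxMono_and_forall_eq_iff,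
    maximal_preimage_iff, isChiInterval_iff_ordConnected, Set.preimage_comp,
    (sChi χ).surjective.preimage_subset_preimage_iff, (sChi χ).surjective.nonempty_preimage]

theorem ncard_isMaxMono (ε : Fin n → ι) (c : ι) :
    {J : Set (Fin n) | IsMaxMono χ ε J ∧ ∀ a ∈ J, ε a = c}.ncard
      = (maximalRuns (ε ∘ sChi χ) c).ncard := by
  rw [show {J : Set (Fin n) | IsMaxMono χ ε J ∧ ∀ a ∈ J, ε a = c}
      = Set.preimage (sChi χ) ⁻¹' maximalRuns (ε ∘ sChi χ) c
    from Set.ext (isMaxMono_and_forall_eq_iff_preimage χ ε c)]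
  exact Set.ncard_preimage_of_injective_subset_range
    (Set.preimage_injective.2 (sChi χ).surjective)
    (by simp [Set.range_eq_univ.2 (Set.preimage_surjective.2 (sChi χ).injective)])

end ChiOrder

/-- The coefficient of `z₁⋯z_n ⊗ 1` (i.e. of `S = ∅`) in `⊤_ι(z₁⋯z_n)` is `−k`, where
`k` is the number of `ι`-coloured maximal `ε`-monochromatic `χ`-intervals; and the
coefficient of `1 ⊗ z₁⋯z_n` (i.e. of `S = univ`) is `1` if both the `≺_χ`-first and
`≺_χ`-last indices are `ι`-coloured, and `0` otherwise. -/
theorem taur_edge_coefficients {n : ℕ} {ι : Type*} [DecidableEq ι] (hn : 0 < n)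
    (χ : Fin n → Bool) (ε : Fin n → ι) (c : ι) :
    taurCoeff χ ε c (∅ : Finset (Fin n)) =
        -(Set.ncard {J : Set (Fin n) | IsMaxMono χ ε J ∧ ∀ a ∈ J, ε a = c} : ℤ) ∧
    taurCoeff χ ε c (Finset.univ : Finset (Fin n)) =
        (if ε (sChi χ ⟨0, hn⟩) = c ∧ ε (sChi χ ⟨n - 1, Nat.sub_lt hn one_pos⟩) = c
          then 1 else 0) := by
  have hbot : IsBot (⟨0, hn⟩ : Fin n) := fun x => Nat.zero_le x
  have htop : IsTop (⟨n - 1, Nat.sub_lt hn one_pos⟩ : Fin n) :=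
    fun x => Nat.le_sub_one_of_lt x.2
  constructor
  · rw [taurCoeff_eq_intervalCoeff, map_empty, intervalCoeff_empty, ncard_isMaxMono,
      ncard_maximalRuns]
  · rw [taurCoeff_eq_intervalCoeff, map_univ_equiv, intervalCoeff_univ _ _ hbot htop]
    rfl
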